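/- Let X be a weakly Lindelöf determined real Banach space, i.e., assume there exists a set M ⊆ X whose closed linear span is X and such that for every x* ∈ X* the set {x ∈ M : x*(x) ≠ 0} is countable. Then X contains a complemented copy of c₀ if and only if X contains an isomorphic copy of c₀. -/

import Mathlib

/-!
If `f : c₀ → X` is an isomorphic embedding, Hahn–Banach extends the coordinate functionals of
`c₀` to a bounded sequence `hₙ` in `X*` tending weak* to `0` on `f(c₀)`. As in Sobczyk's theorem,
it suffices to find functionals `gₙ` with the same norm bound, annihilating `f(c₀)`, such that
`hₙ - gₙ → 0` weak*: then `S x = (hₙ x - gₙ x)ₙ` is a bounded left inverse `X → c₀` of `f`, and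
`f ∘ S` projects onto `f(c₀)`.

By Banach–Alaoglu every weak* cluster point of `(hₙ)` lies in the annihilator ball, so `hₙ` is
eventually close to it at any finitely many points, and a diagonal choice gives `hₙ - gₙ → 0` on
any countable set. Separability is replaced by the WLD hypothesis: only countably many points of
`M` are seen by some `hₙ`, and asking the `gₙ` to vanish on the other points of `M` as well gives
convergence on all of `M`, hence, the family being equibounded, on its closed span `X`.
-/

open scoped ZeroAtInfty

/-- `X` contains an isomorphic copy of `Z`: a continuous linear injection from `Z` into `X`
which is bounded below (an isomorphism onto its image). -/
def ContainsIsomorphicCopy (Z X : Type*) [NormedAddCommGroup Z] [NormedSpace ℝ Z]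
    [NormedAddCommGroup X] [NormedSpace ℝ X] : Prop :=
  ∃ f : Z →L[ℝ] X, ∃ c : ℝ, 0 < c ∧ ∀ z : Z, c * ‖z‖ ≤ ‖f z‖

/-- `X` contains a complemented copy of `Z`: a closed subspace `F` of `X` isomorphic to `Z`
together with a bounded linear projection of `X` onto `F`. -/
def ContainsComplementedCopy (Z X : Type*) [NormedAddCommGroup Z] [NormedSpace ℝ Z]
    [NormedAddCommGroup X] [NormedSpace ℝ X] : Prop :=
  ∃ F : Submodule ℝ X, IsClosed (F : Set X) ∧ Nonempty (F ≃L[ℝ] Z) ∧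
    ∃ P : X →L[ℝ] X, LinearMap.range (P : X →ₗ[ℝ] X) = F ∧ ∀ x ∈ F, P x = x

open Filter Topology

theorem exists_seq_tendsto_atTop_eventually {α : Type*} {A : Set α} (hA : A.Nonempty)
    {p : ℕ → ℕ → α → Prop} (h : ∀ m, ∀ᶠ n in atTop, ∃ a ∈ A, p m n a) :
    ∃ μ : ℕ → ℕ, Tendsto μ atTop atTop ∧
      ∃ a : ℕ → α, (∀ n, a n ∈ A) ∧ ∀ᶠ n in atTop, p (μ n) n (a n) := by
  classical
  set q : ℕ → ℕ → Prop := fun m n => ∀ j ≤ m, ∃ a ∈ A, p j n a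
  have hq : ∀ m, ∀ᶠ n in atTop, m ≤ n ∧ q m n := fun m =>
    (eventually_ge_atTop m).and <| (eventually_all_finite (Set.finite_Iic m)).2 fun j _ => h j
  set μ : ℕ → ℕ := fun n => Nat.findGreatest (q · n) n
  have hμ : ∀ᶠ n in atTop, ∃ a ∈ A, p (μ n) n a := (hq 0).mono fun n hn =>
    Nat.findGreatest_spec (P := (q · n)) (Nat.zero_le n) hn.2 _ le_rfl
  have hchoice : ∀ n, ∃ a ∈ A, (∃ b ∈ A, p (μ n) n b) → p (μ n) n a := fun n => by
    by_cases hn : ∃ b ∈ A, p (μ n) n b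
    · obtain ⟨a, ha, hpa⟩ := hn
      exact ⟨a, ha, fun _ => hpa⟩
    · exact ⟨hA.some, hA.some_mem, fun hn' => absurd hn' hn⟩
  choose a haA hap using hchoice
  refine ⟨μ, tendsto_atTop.2 fun m => (hq m).mono fun n hn => Nat.le_findGreatest hn.1 hn.2,
    a, haA, hμ.mono hap⟩

theorem tendsto_zero_of_dense_span {𝕜 E G ι : Type*} [NontriviallyNormedField 𝕜]
    [NormedAddCommGroup E] [NormedSpace 𝕜 E] [NormedAddCommGroup G] [NormedSpace 𝕜 G]
    {l : Filter ι} {F : ι → E →L[𝕜] G} {C : ℝ} (hF : ∀ i, ‖F i‖ ≤ C) {s : Set E}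
    (hs : Dense (Submodule.span 𝕜 s : Set E)) (h : ∀ x ∈ s, Tendsto (F · x) l (𝓝 0)) (x : E) :
    Tendsto (F · x) l (𝓝 0) := by
  have hequi := (NormedSpace.equicontinuous_TFAE F).out 5 1
  replace hequi := hequi.mp ⟨C, hF⟩
  have hclosed : IsClosed {x | Tendsto (F · x) l (𝓝 0)} :=
    hequi.isClosed_setOfPred_tendsto (f := 0) continuous_const
  suffices (Submodule.span 𝕜 s : Set E) ⊆ {x | Tendsto (F · x) l (𝓝 0)} from
    hclosed.closure_subset_iff.2 this (hs.closure_eq ▸ Set.mem_univ x)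
  intro y hy
  induction hy using Submodule.span_induction with
  | mem y hy => exact h y hy
  | zero => simpa using tendsto_const_nhds
  | add y z _ _ hy hz => simpa using hy.add hz
  | smul a y _ hy => simpa using hy.const_smul a

namespace ZeroAtInftyContinuousMap

variable {α β : Type*} [TopologicalSpace α] (𝕜 : Type*) [NontriviallyNormedField 𝕜]
  [NormedAddCommGroup β] [NormedSpace 𝕜 β]

noncomputable def evalCLM (x : α) : C₀(α, β) →L[𝕜] β :=
  LinearMap.mkContinuous
    { toFun := fun f => f x
      map_add' := fun _ _ => rfl
      map_smul' := fun _ _ => rfl } 1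
    fun f => by simpa using f.toBCF.norm_coe_le_norm x

@[simp]
theorem evalCLM_apply (x : α) (f : C₀(α, β)) : evalCLM 𝕜 x f = f x :=
  rfl

theorem norm_evalCLM_le (x : α) : ‖(evalCLM 𝕜 x : C₀(α, β) →L[𝕜] β)‖ ≤ 1 :=
  LinearMap.mkContinuous_norm_le _ zero_le_one _

end ZeroAtInftyContinuousMap

theorem exists_continuousLinearMap_zeroAtInfty_apply {X : Type*} [NormedAddCommGroup X]
    [NormedSpace ℝ X] {F : ℕ → StrongDual ℝ X} {C : ℝ} (hF : ∀ n, ‖F n‖ ≤ C)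
    (h : ∀ x, Tendsto (F · x) atTop (𝓝 0)) :
    ∃ S : X →L[ℝ] C₀(ℕ, ℝ), ∀ x n, S x n = F n x := by
  let S : X →ₗ[ℝ] C₀(ℕ, ℝ) :=
    { toFun := fun x => ⟨⟨(F · x), continuous_of_discreteTopology⟩, by
        simpa [cocompact_eq_atTop] using h x⟩
      map_add' := fun x y => by ext; simp
      map_smul' := fun a x => by ext; simp }
  refine ⟨S.mkContinuous C fun x => ?_, fun x n => rfl⟩
  rw [← ZeroAtInftyContinuousMap.norm_toBCF_eq_norm,
    BoundedContinuousFunction.norm_le_of_nonempty]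
  exact fun n => ((F n).le_opNorm x).trans (by gcongr; exacts [hF n])

theorem exists_extension_comp_eq_of_mul_norm_le {E X : Type*} [NormedAddCommGroup E]
    [NormedSpace ℝ E] [NormedAddCommGroup X] [NormedSpace ℝ X] (f : E →L[ℝ] X) {c : ℝ}
    (hc : 0 < c) (hf : ∀ z, c * ‖z‖ ≤ ‖f z‖) (φ : StrongDual ℝ E) :
    ∃ ψ : StrongDual ℝ X, ‖ψ‖ ≤ c⁻¹ * ‖φ‖ ∧ ∀ z, ψ (f z) = φ z := by
  have hinj : Function.Injective f := (injective_iff_map_eq_zero f).2 fun z hz => by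
    have := hf z
    rw [hz, norm_zero, ← mul_zero c] at this
    exact norm_le_zero_iff.1 (le_of_mul_le_mul_left this hc)
  set e := LinearEquiv.ofInjective (f : E →ₗ[ℝ] X) hinj
  have hbound : ∀ y, ‖φ (e.symm y)‖ ≤ c⁻¹ * ‖φ‖ * ‖y‖ := fun y => calc
    ‖φ (e.symm y)‖ ≤ ‖φ‖ * ‖e.symm y‖ := φ.le_opNorm _
    _ ≤ ‖φ‖ * (c⁻¹ * ‖y‖) := by
      gcongr
      have hfe : f (e.symm y) = y := LinearEquiv.ofInjective_symm_apply _ y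
      rw [le_inv_mul_iff₀ hc]
      exact (hf _).trans_eq (congrArg norm hfe)
    _ = c⁻¹ * ‖φ‖ * ‖y‖ := by ring
  obtain ⟨ψ, hψ, hψn⟩ := exists_extension_norm_eq _
    (((φ : E →ₗ[ℝ] ℝ).comp e.symm.toLinearMap).mkContinuous _ hbound)
  refine ⟨ψ, hψn ▸ LinearMap.mkContinuous_norm_le _ (by positivity) _, fun z => ?_⟩
  simpa [e] using hψ (e z)

theorem ContainsComplementedCopy.containsIsomorphicCopy {Z X : Type*} [NormedAddCommGroup Z]
    [NormedSpace ℝ Z] [NormedAddCommGroup X] [NormedSpace ℝ X]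
    (h : ContainsComplementedCopy Z X) : ContainsIsomorphicCopy Z X := by
  obtain ⟨F, -, ⟨e⟩, -⟩ := h
  refine ⟨F.subtypeL.comp (e.symm : Z →L[ℝ] F), (‖(e : F →L[ℝ] Z)‖ + 1)⁻¹, by positivity,
    fun z => ?_⟩
  rw [inv_mul_le_iff₀ (by positivity)]
  calc ‖z‖ = ‖(e : F →L[ℝ] Z) (e.symm z)‖ := by simp
    _ ≤ ‖(e : F →L[ℝ] Z)‖ * ‖e.symm z‖ := (e : F →L[ℝ] Z).le_opNorm _
    _ ≤ _ := by gcongr <;> simp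

theorem containsComplementedCopy_of_leftInverse {Z X : Type*} [NormedAddCommGroup Z]
    [NormedSpace ℝ Z] [NormedAddCommGroup X] [NormedSpace ℝ X] (f : Z →L[ℝ] X)
    (S : X →L[ℝ] Z) (hS : Function.LeftInverse S f) : ContainsComplementedCopy Z X := by
  set F := LinearMap.range (f : Z →ₗ[ℝ] X)
  have hF : ∀ x ∈ F, f (S x) = x := by
    rintro _ ⟨z, rfl⟩
    simp [hS z]
  refine ⟨F, ?_, ⟨?_⟩, f.comp S, ?_, fun x hx => hF x hx⟩
  · convert isClosed_eq (f.comp S).continuous continuous_id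
    exact Set.ext fun x => ⟨hF x, fun hx => ⟨S x, hx⟩⟩
  · exact ContinuousLinearEquiv.equivOfInverse (S.comp F.subtypeL)
      (f.codRestrict F fun z => ⟨z, rfl⟩) (fun x => Subtype.ext (hF x x.2)) hS
  · refine le_antisymm (LinearMap.range_comp_le_range _ _) ?_
    rintro _ ⟨z, rfl⟩
    exact ⟨f z, by simp [hS z]⟩

theorem eventually_exists_annihilator_abs_sub_lt {X ι : Type*} [NormedAddCommGroup X]
    [NormedSpace ℝ X] {l : Filter ι} {h : ι → StrongDual ℝ X} {C : ℝ} (hh : ∀ i, ‖h i‖ ≤ C)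
    {Y : Set X} (hY : ∀ y ∈ Y, Tendsto (h · y) l (𝓝 0)) {T : Set X} (hT : T.Finite) {ε : ℝ}
    (hε : 0 < ε) :
    ∀ᶠ i in l, ∃ g : StrongDual ℝ X, (‖g‖ ≤ C ∧ ∀ y ∈ Y, g y = 0) ∧
      ∀ x ∈ T, |h i x - g x| < ε := by
  set K : Set (WeakDual ℝ X) := {g | ‖WeakDual.toStrongDual g‖ ≤ C ∧ ∀ y ∈ Y, g y = 0}
  set W : Set (WeakDual ℝ X) := ⋃ g ∈ K, ⋂ x ∈ T, {φ | |φ x - g x| < ε}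
  have hW : IsOpen W := isOpen_biUnion fun g _ => hT.isOpen_biInter fun x _ =>
    isOpen_lt ((WeakDual.eval_continuous x).sub continuous_const).abs continuous_const
  have hKW : K ⊆ W := fun g hg =>
    Set.mem_biUnion hg (Set.mem_iInter₂.2 fun x _ => by simpa using hε)
  have hK : ∀ φ ∈ WeakDual.toStrongDual ⁻¹' Metric.closedBall 0 C,
      MapClusterPt φ l (StrongDual.toWeakDual ∘ h) → φ ∈ K := by
    intro φ hφ hφh
    refine ⟨by simpa using hφ, fun y hy => ?_⟩
    have := hφh.continuousAt_comp (WeakDual.eval_continuous y).continuousAt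
    exact eq_of_nhds_neBot (ClusterPt.mono this (hY y hy))
  have hlim := (WeakDual.isCompact_closedBall 0 C).tendsto_nhdsSet_of_mapClusterPt
    (Eventually.of_forall fun i => by simpa using hh i) hK
  filter_upwards [hlim (hW.mem_nhdsSet.2 hKW)] with i hi
  obtain ⟨g, hg, hgT⟩ := Set.mem_iUnion₂.1 hi
  exact ⟨g, hg, fun x hx => Set.mem_iInter₂.1 hgT x hx⟩

theorem exists_seq_annihilator_tendsto_sub_of_countable {X : Type*} [NormedAddCommGroup X]
    [NormedSpace ℝ X] {h : ℕ → StrongDual ℝ X} {C : ℝ} (hh : ∀ n, ‖h n‖ ≤ C) {Y : Set X}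
    (hY : ∀ y ∈ Y, Tendsto (h · y) atTop (𝓝 0)) {T : Set X} (hT : T.Countable) :
    ∃ g : ℕ → StrongDual ℝ X, (∀ n, ‖g n‖ ≤ C ∧ ∀ y ∈ Y, g n y = 0) ∧
      ∀ x ∈ T, Tendsto (fun n => h n x - g n x) atTop (𝓝 0) := by
  obtain ⟨x, hTx⟩ := Set.countable_iff_exists_subset_range.1 hT
  set K := {g : StrongDual ℝ X | ‖g‖ ≤ C ∧ ∀ y ∈ Y, g y = 0}
  have hK : K.Nonempty := ⟨0, by simpa using (norm_nonneg _).trans (hh 0), fun _ _ => rfl⟩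
  have happrox : ∀ m : ℕ, ∀ᶠ n in atTop, ∃ g ∈ K,
      ∀ k ≤ m, |h n (x k) - g (x k)| < 1 / (m + 1) := fun m =>
    (eventually_exists_annihilator_abs_sub_lt hh hY ((Set.finite_Iic m).image x)
      Nat.one_div_pos_of_nat).mono fun n ⟨g, hg, hgx⟩ =>
        ⟨g, hg, fun k hk => hgx _ ⟨k, hk, rfl⟩⟩
  obtain ⟨μ, hμ, g, hgK, hgx⟩ := exists_seq_tendsto_atTop_eventually hK happrox
  refine ⟨g, hgK, ?_⟩
  rintro _ hxT
  obtain ⟨k, rfl⟩ := hTx hxT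
  refine squeeze_zero_norm' ?_ (tendsto_one_div_add_atTop_nhds_zero_nat.comp hμ)
  filter_upwards [hgx, hμ.eventually_ge_atTop k] with n hn hkn
  exact (hn k hkn).le

theorem exists_seq_annihilator_tendsto_sub_of_countable_support {X : Type*}
    [NormedAddCommGroup X] [NormedSpace ℝ X] {M : Set X}
    (hM1 : Dense ((Submodule.span ℝ M : Submodule ℝ X) : Set X))
    (hM2 : ∀ f : X →L[ℝ] ℝ, {x ∈ M | f x ≠ 0}.Countable) {h : ℕ → StrongDual ℝ X} {C : ℝ}
    (hh : ∀ n, ‖h n‖ ≤ C) {Y : Set X} (hY : ∀ y ∈ Y, Tendsto (h · y) atTop (𝓝 0)) :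
    ∃ g : ℕ → StrongDual ℝ X, (∀ n, ‖g n‖ ≤ C ∧ ∀ y ∈ Y, g n y = 0) ∧
      ∀ x, Tendsto (fun n => h n x - g n x) atTop (𝓝 0) := by
  set T := {x ∈ M | ∃ n, h n x ≠ 0}
  have hT : T.Countable := (Set.countable_iUnion fun n => hM2 (h n)).mono <| by
    rintro x ⟨hxM, n, hn⟩
    exact Set.mem_iUnion.2 ⟨n, hxM, hn⟩
  have hMT : ∀ x ∈ M \ T, ∀ n, h n x = 0 := fun x hx n =>
    by_contra fun hn => hx.2 ⟨hx.1, n, hn⟩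
  obtain ⟨g, hg, hgT⟩ := exists_seq_annihilator_tendsto_sub_of_countable hh
    (Y := Y ∪ (M \ T)) (fun y hy => hy.elim (hY y) fun hyM => by simp [hMT y hyM]) hT
  refine ⟨g, fun n => ⟨(hg n).1, fun y hy => (hg n).2 y (.inl hy)⟩, ?_⟩
  refine tendsto_zero_of_dense_span (F := fun n => h n - g n)
    (fun n => (norm_sub_le _ _).trans (add_le_add (hh n) (hg n).1)) hM1 fun x hxM => ?_
  by_cases hxT : x ∈ T
  · exact hgT x hxT
  · simp [hMT x ⟨hxM, hxT⟩, (hg _).2 x (.inr ⟨hxM, hxT⟩)]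

theorem copy_c0_iff_complemented_copy_c0_of_WLD_general
    (X : Type*) [NormedAddCommGroup X] [NormedSpace ℝ X]
    (M : Set X) (hM1 : Dense ((Submodule.span ℝ M : Submodule ℝ X) : Set X))
    (hM2 : ∀ f : X →L[ℝ] ℝ, {x ∈ M | f x ≠ 0}.Countable) :
    ContainsComplementedCopy C₀(ℕ, ℝ) X ↔ ContainsIsomorphicCopy C₀(ℕ, ℝ) X := by
  refine ⟨ContainsComplementedCopy.containsIsomorphicCopy, fun ⟨f, c, hc, hf⟩ => ?_⟩
  choose h hh hhf using fun n =>
    exists_extension_comp_eq_of_mul_norm_le f hc hf (ZeroAtInftyContinuousMap.evalCLM ℝ n)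
  have hnorm : ∀ n, ‖h n‖ ≤ c⁻¹ := fun n => (hh n).trans
    (mul_le_of_le_one_right (by positivity) (ZeroAtInftyContinuousMap.norm_evalCLM_le ℝ (β := ℝ) n))
  have hrange : ∀ y ∈ Set.range f, Tendsto (h · y) atTop (𝓝 0) := by
    rintro _ ⟨z, rfl⟩
    simpa [hhf, cocompact_eq_atTop] using z.zero_at_infty'
  obtain ⟨g, hg, hhg⟩ :=
    exists_seq_annihilator_tendsto_sub_of_countable_support hM1 hM2 hnorm hrange
  obtain ⟨S, hS⟩ := exists_continuousLinearMap_zeroAtInfty_apply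
    (fun n => (norm_sub_le _ _).trans (add_le_add (hnorm n) (hg n).1)) hhg
  refine containsComplementedCopy_of_leftInverse f S fun z => ?_
  ext n
  simp [hS, hhf, (hg n).2 _ ⟨z, rfl⟩]

theorem copy_c0_iff_complemented_copy_c0_of_WLD
    (X : Type*) [NormedAddCommGroup X] [NormedSpace ℝ X] [CompleteSpace X]
    (M : Set X) (hM1 : Dense ((Submodule.span ℝ M : Submodule ℝ X) : Set X))
    (hM2 : ∀ f : X →L[ℝ] ℝ, {x ∈ M | f x ≠ 0}.Countable) :
    ContainsComplementedCopy C₀(ℕ, ℝ) X ↔ ContainsIsomorphicCopy C₀(ℕ, ℝ) X :=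
  copy_c0_iff_complemented_copy_c0_of_WLD_general X M hM1 hM2
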